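/- Let a,b>0, γ∈ℝ, γ_* := −4(1/a+1/b), and define N_γ := {κ>0 : |γ·sinh(κa)/(2κ) + sinh(κ(a+b))/sinh(κb)| ≤ 1 + sinh(κa)/sinh(κb)}. Then: (i) if γ ≥ 0, N_γ is empty; (ii) if γ_* ≤ γ < 0, then N_γ = (0,κ₁], where κ₁ is the unique positive root of γ/(2κ) = −tanh(κa/2) − tanh(κb/2); (iii) if γ < γ_*, then N_γ = [κ₂,κ₁], where κ₁ is as above and κ₂ is the unique positive root of γ/(2κ) = −coth(κa/2) − coth(κb/2). -/

import Mathlib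

open Real Set

/-!
With `x = κa/2`, `y = κb/2` and `t = γ/(2κ)`, the half-angle formulas factor the two sides of the
band condition: `(1 + sinh 2x / sinh 2y) ∓ (sinh 2x · t + sinh (2x + 2y) / sinh 2y)` equals
`sinh 2x · (-t - tanh x - tanh y)`, resp. `sinh 2x · (coth x + coth y + t)`. Hence `κ` satisfies the
condition iff `-γ` lies between `2κ (tanh (κa/2) + tanh (κb/2))` and
`2κ (coth (κa/2) + coth (κb/2))`.
Both bounds are strictly increasing in `κ`; the first is positive and the second exceeds
`4 (1/a + 1/b) = -γ_*` because `x coth x > 1`. So the admissible `κ` are cut out by the points where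
the bounds equal `-γ`.
-/

lemma tanh_pos_of_pos {x : ℝ} (hx : 0 < x) : 0 < tanh x := by
  rw [tanh_eq_sinh_div_cosh]
  exact div_pos (sinh_pos_iff.2 hx) (cosh_pos x)

lemma tanh_strictMono : StrictMono tanh := by
  intro x y hxy
  rw [tanh_eq_sinh_div_cosh, tanh_eq_sinh_div_cosh, div_lt_div_iff₀ (cosh_pos x) (cosh_pos y)]
  have := sinh_neg_iff.2 (sub_neg.2 hxy)
  rw [sinh_sub] at this
  linarith

lemma sinh_lt_mul_cosh {x : ℝ} (hx : 0 < x) : sinh x < x * cosh x := by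
  have hmono : StrictMonoOn (fun y => y * cosh y - sinh y) (Ici 0) := by
    refine strictMonoOn_of_deriv_pos (convex_Ici 0) (by fun_prop) fun y hy => ?_
    rw [interior_Ici] at hy
    have hd : HasDerivAt (fun y => y * cosh y - sinh y) (1 * cosh y + y * sinh y - cosh y) y :=
      ((hasDerivAt_id y).mul (hasDerivAt_cosh y)).sub (hasDerivAt_sinh y)
    rw [hd.deriv]
    nlinarith [mul_pos hy (sinh_pos_iff.2 hy)]
  simpa using hmono self_mem_Ici hx.le hx

lemma one_lt_mul_cosh_div_sinh {x : ℝ} (hx : 0 < x) : 1 < x * cosh x / sinh x := by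
  rw [one_lt_div (sinh_pos_iff.2 hx)]
  exact sinh_lt_mul_cosh hx

lemma strictMonoOn_mul_cosh_div_sinh : StrictMonoOn (fun x => x * cosh x / sinh x) (Ioi 0) := by
  refine strictMonoOn_of_deriv_pos (convex_Ioi 0)
    (continuousOn_of_forall_continuousAt fun x hx => by
      have := (sinh_pos_iff.2 (mem_Ioi.1 hx)).ne'
      fun_prop (disch := exact this)) fun x hx => ?_
  rw [interior_Ioi, mem_Ioi] at hx
  have hs : 0 < sinh x := sinh_pos_iff.2 hx
  have hd : HasDerivAt (fun x => x * cosh x / sinh x)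
      (((1 * cosh x + x * sinh x) * sinh x - x * cosh x * cosh x) / sinh x ^ 2) x :=
    ((hasDerivAt_id x).mul (hasDerivAt_cosh x)).div (hasDerivAt_sinh x) hs.ne'
  rw [hd.deriv]
  have hdouble : 2 * x < 2 * sinh x * cosh x := sinh_two_mul x ▸ self_lt_sinh_iff.2 (by linarith)
  have hnum : (1 * cosh x + x * sinh x) * sinh x - x * cosh x * cosh x = sinh x * cosh x - x := by
    linear_combination (-x) * cosh_sq x
  rw [hnum]
  exact div_pos (by linarith) (by positivity)

lemma abs_sinh_mul_add_le_iff {x y t : ℝ} (hx : 0 < x) (hy : 0 < y) :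
    |sinh (2 * x) * t + sinh (2 * x + 2 * y) / sinh (2 * y)| ≤ 1 + sinh (2 * x) / sinh (2 * y) ↔
      tanh x + tanh y ≤ -t ∧ -t ≤ cosh x / sinh x + cosh y / sinh y := by
  have hsx := sinh_pos_iff.2 hx
  have hsy := sinh_pos_iff.2 hy
  have hcx := cosh_pos x
  have hcy := cosh_pos y
  have hs2x : 0 < sinh (2 * x) := sinh_pos_iff.2 (by positivity)
  have hcx2 := cosh_sq x
  have hcy2 := cosh_sq y
  have hupper : 1 + sinh (2 * x) / sinh (2 * y) -
      (sinh (2 * x) * t + sinh (2 * x + 2 * y) / sinh (2 * y)) = sinh (2 * x) * (-t - (tanh x + tanh y)) := by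
    rw [sinh_add, sinh_two_mul, sinh_two_mul, cosh_two_mul, cosh_two_mul, tanh_eq_sinh_div_cosh,
      tanh_eq_sinh_div_cosh]
    field_simp
    linear_combination (-(sinh y * cosh y)) * hcx2 + (-(sinh x * cosh x)) * hcy2
  have hlower : sinh (2 * x) * t + sinh (2 * x + 2 * y) / sinh (2 * y) -
      -(1 + sinh (2 * x) / sinh (2 * y)) = sinh (2 * x) * (cosh x / sinh x + cosh y / sinh y - -t) := by
    rw [sinh_add, sinh_two_mul, sinh_two_mul, cosh_two_mul, cosh_two_mul]
    field_simp
    linear_combination (-(sinh y * cosh y)) * hcx2 + (-(sinh x * cosh x)) * hcy2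
  rw [abs_le, ← sub_nonneg, hlower, mul_nonneg_iff_of_pos_left hs2x, ← sub_nonneg (b := _ + _),
    hupper, mul_nonneg_iff_of_pos_left hs2x, sub_nonneg, sub_nonneg]
  exact and_comm

noncomputable def tanhEdge (a b κ : ℝ) : ℝ := 2 * κ * (tanh (κ * a / 2) + tanh (κ * b / 2))

noncomputable def cothEdge (a b κ : ℝ) : ℝ :=
  2 * κ * (cosh (κ * a / 2) / sinh (κ * a / 2) + cosh (κ * b / 2) / sinh (κ * b / 2))

lemma negBand_iff_neg_mem_Icc {a b γ κ : ℝ} (ha : 0 < a) (hb : 0 < b) (hκ : 0 < κ) :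
    |γ * sinh (κ * a) / (2 * κ) + sinh (κ * (a + b)) / sinh (κ * b)| ≤
        1 + sinh (κ * a) / sinh (κ * b) ↔
      -γ ∈ Icc (tanhEdge a b κ) (cothEdge a b κ) := by
  have h := abs_sinh_mul_add_le_iff (t := γ / (2 * κ)) (x := κ * a / 2) (y := κ * b / 2)
    (by positivity) (by positivity)
  have h2κ : 0 < 2 * κ := by positivity
  rw [← neg_div, le_div_iff₀ h2κ, div_le_iff₀ h2κ, mul_div_cancel₀ _ two_ne_zero,
    mul_div_cancel₀ _ two_ne_zero, ← mul_add, mul_comm _ (γ / _), div_mul_eq_mul_div] at h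
  rw [mem_Icc, tanhEdge, cothEdge, mul_comm (2 * κ), mul_comm (2 * κ), ← h]

lemma tanhEdge_pos {a b κ : ℝ} (ha : 0 < a) (hb : 0 < b) (hκ : 0 < κ) : 0 < tanhEdge a b κ := by
  have := tanh_pos_of_pos (by positivity : 0 < κ * a / 2)
  have := tanh_pos_of_pos (by positivity : 0 < κ * b / 2)
  unfold tanhEdge
  positivity

lemma strictMonoOn_tanhEdge {a b : ℝ} (ha : 0 < a) (hb : 0 < b) :
    StrictMonoOn (tanhEdge a b) (Ioi 0) := by
  intro κ hκ κ' _ hlt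
  have hκ : 0 < κ := hκ
  have hA := tanh_strictMono (by nlinarith : κ * a / 2 < κ' * a / 2)
  have hB := tanh_strictMono (by nlinarith : κ * b / 2 < κ' * b / 2)
  have := tanh_pos_of_pos (by positivity : 0 < κ * a / 2)
  have := tanh_pos_of_pos (by positivity : 0 < κ * b / 2)
  unfold tanhEdge
  exact mul_lt_mul'' (by linarith) (by linarith) (by linarith) (by linarith)

lemma two_mul_mul_cosh_div_sinh_half {c : ℝ} (hc : c ≠ 0) (κ : ℝ) :
    2 * κ * (cosh (κ * c / 2) / sinh (κ * c / 2)) =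
      4 / c * (κ * c / 2 * cosh (κ * c / 2) / sinh (κ * c / 2)) := by
  field_simp
  ring

lemma strictMonoOn_cothEdge {a b : ℝ} (ha : 0 < a) (hb : 0 < b) :
    StrictMonoOn (cothEdge a b) (Ioi 0) := by
  have hside : ∀ c : ℝ, 0 < c → StrictMonoOn
      (fun κ => 2 * κ * (cosh (κ * c / 2) / sinh (κ * c / 2))) (Ioi 0) := by
    intro c hc κ hκ κ' hκ' hlt
    simp only [two_mul_mul_cosh_div_sinh_half hc.ne']
    refine mul_lt_mul_of_pos_left (strictMonoOn_mul_cosh_div_sinh ?_ ?_ ?_) (by positivity)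
    all_goals simp only [mem_Ioi] at *
    all_goals nlinarith
  intro κ hκ κ' hκ' hlt
  have hA := hside a ha hκ hκ' hlt
  have hB := hside b hb hκ hκ' hlt
  simp only [cothEdge, mul_add] at *
  linarith

lemma lt_cothEdge {a b κ : ℝ} (ha : 0 < a) (hb : 0 < b) (hκ : 0 < κ) :
    4 * (1 / a + 1 / b) < cothEdge a b κ := by
  have hside : ∀ c : ℝ, 0 < c → 4 / c < 2 * κ * (cosh (κ * c / 2) / sinh (κ * c / 2)) := by
    intro c hc
    rw [two_mul_mul_cosh_div_sinh_half hc.ne']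
    exact lt_mul_of_one_lt_right (by positivity) (one_lt_mul_cosh_div_sinh (by positivity))
  have hA := hside a ha
  have hB := hside b hb
  rw [cothEdge, mul_add, mul_add, mul_one_div, mul_one_div]
  linarith

lemma two_mul_mul_add_eq_neg_of_div_eq {γ κ u v : ℝ} (hκ : 0 < κ) (h : γ / (2 * κ) = -u - v) :
    2 * κ * (u + v) = -γ := by
  rw [div_eq_iff (by positivity)] at h
  linear_combination h

theorem stmt_6 (a b γ : ℝ) (ha : 0 < a) (hb : 0 < b)
    (N : Set ℝ)
    (hN : N = {κ : ℝ | 0 < κ ∧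
      |γ * Real.sinh (κ * a) / (2 * κ) + Real.sinh (κ * (a + b)) / Real.sinh (κ * b)| ≤
        1 + Real.sinh (κ * a) / Real.sinh (κ * b)}) :
    (0 ≤ γ → N = ∅) ∧
    (-4 * (1 / a + 1 / b) ≤ γ → γ < 0 →
      ∀ κ₁ : ℝ, (0 < κ₁ ∧
          γ / (2 * κ₁) = -Real.tanh (κ₁ * a / 2) - Real.tanh (κ₁ * b / 2)) →
        N = Set.Ioc 0 κ₁) ∧
    (γ < -4 * (1 / a + 1 / b) →
      ∀ κ₁ κ₂ : ℝ,
        (0 < κ₁ ∧ γ / (2 * κ₁) = -Real.tanh (κ₁ * a / 2) - Real.tanh (κ₁ * b / 2)) →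
        (0 < κ₂ ∧ γ / (2 * κ₂) =
          -(Real.cosh (κ₂ * a / 2) / Real.sinh (κ₂ * a / 2)) -
            Real.cosh (κ₂ * b / 2) / Real.sinh (κ₂ * b / 2)) →
        N = Set.Icc κ₂ κ₁) := by
  have hN' : N = {κ | 0 < κ ∧ tanhEdge a b κ ≤ -γ ∧ -γ ≤ cothEdge a b κ} := by
    rw [hN]
    ext κ
    exact and_congr_right (negBand_iff_neg_mem_Icc ha hb)
  have htanh := strictMonoOn_tanhEdge ha hb
  have hcoth := strictMonoOn_cothEdge ha hb
  subst hN'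
  refine ⟨fun hγ => ?_, fun hγ _ κ₁ ⟨hκ₁, h₁⟩ => ?_, fun _ κ₁ κ₂ ⟨hκ₁, h₁⟩ ⟨hκ₂, h₂⟩ => ?_⟩
  · refine eq_empty_of_forall_notMem fun κ ⟨hκ, hlow, _⟩ => ?_
    linarith [tanhEdge_pos ha hb hκ]
  · have e₁ : tanhEdge a b κ₁ = -γ := two_mul_mul_add_eq_neg_of_div_eq hκ₁ h₁
    ext κ
    refine and_congr_right fun hκ => ?_
    rw [← e₁, htanh.le_iff_le hκ hκ₁, and_iff_left_iff_imp]
    intro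
    linarith [lt_cothEdge ha hb hκ]
  · have e₁ : tanhEdge a b κ₁ = -γ := two_mul_mul_add_eq_neg_of_div_eq hκ₁ h₁
    have e₂ : cothEdge a b κ₂ = -γ := two_mul_mul_add_eq_neg_of_div_eq hκ₂ h₂
    ext κ
    constructor
    · rintro ⟨hκ, hlow, hup⟩
      exact ⟨(hcoth.le_iff_le hκ₂ hκ).1 (e₂ ▸ hup), (htanh.le_iff_le hκ hκ₁).1 (e₁ ▸ hlow)⟩
    · rintro ⟨hκ₂κ, hκκ₁⟩
      have hκ : 0 < κ := hκ₂.trans_le hκ₂κ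
      exact ⟨hκ, e₁ ▸ htanh.monotoneOn hκ hκ₁ hκκ₁, e₂ ▸ hcoth.monotoneOn hκ₂ hκ hκ₂κ⟩
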